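/- arXiv:2511.02164 — 2 statements merged into one kernel-verified Lean document; each statement's English description precedes it below -/
import Mathlib

section
/- Weak merge probability decomposition: let P be a probability measure on traces and C₁ = (A₁, G₁), C₂ = (A₂, G₂) contracts. If P(τ ⊨ C₁ | τ ∈ A₁) ≥ p₁ (when P(A₁) > 0) and P(τ ⊨ C₂ | τ ∉ A₁) ≥ p₂ (when P(A₁) < 1), then P(τ ⊨ C₁ ⋈ C₂) ≥ p₁·P(A₁) + p₂·(1 − P(A₁)), where C₁ ⋈ C₂ = (A₁ ∨ A₂, G₁ ∨ G₂ ∨ ¬(A₁ ∨ A₂)). -/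
/-!
Split the traces according to whether they satisfy `A₁`. Inside `A₁` a trace satisfying `C₁`
satisfies the merge through `G₁`; outside `A₁` a trace satisfying `C₂` satisfies it through `G₂`
or, if it also misses `A₂`, vacuously. The law of total probability then adds the two
conditional bounds, weighted by `P(A₁)` and `P(A₁ᶜ) = 1 - P(A₁)`.
-/

open MeasureTheory ProbabilityTheory Set

section Contract

variable {α : Type*} {A₁ G₁ A₂ G₂ : Set α}

lemma inter_setOf_imp_subset_weakMerge :
    A₁ ∩ {τ | τ ∈ A₁ → τ ∈ G₁} ⊆ {τ | τ ∈ A₁ ∪ A₂ → τ ∈ G₁ ∪ G₂ ∪ (A₁ ∪ A₂)ᶜ} :=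
  fun _ ⟨hA₁, hsat⟩ _ => Or.inl (Or.inl (hsat hA₁))

lemma compl_inter_setOf_imp_subset_weakMerge :
    A₁ᶜ ∩ {τ | τ ∈ A₂ → τ ∈ G₂} ⊆ {τ | τ ∈ A₁ ∪ A₂ → τ ∈ G₁ ∪ G₂ ∪ (A₁ ∪ A₂)ᶜ} :=
  fun _ ⟨hA₁, hsat⟩ hA => Or.inl (Or.inr (hsat (hA.resolve_left hA₁)))

end Contract

section Measure

variable {Ω : Type*} [MeasurableSpace Ω] {μ : Measure Ω} [IsFiniteMeasure μ] {s t u v : Set Ω}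

lemma mul_measureReal_le_measureReal_inter_of_le_cond (hs : MeasurableSet s) {p : ℝ}
    (h : 0 < μ s → p ≤ (μ[t|s]).toReal) : p * μ.real s ≤ μ.real (s ∩ t) := by
  rcases eq_zero_or_pos (μ s) with hs₀ | hs₀
  · simp [measureReal_def, hs₀]
  · calc p * μ.real s ≤ (μ[t|s]).toReal * μ.real s := by gcongr; exact h hs₀
      _ = μ.real (s ∩ t) := by
        rw [measureReal_def, ← ENNReal.toReal_mul, cond_mul_eq_inter hs, measureReal_def]

lemma measureReal_inter_add_compl_inter_le (hs : MeasurableSet s)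
    (ht : s ∩ t ⊆ u) (hv : sᶜ ∩ v ⊆ u) :
    μ.real (s ∩ t) + μ.real (sᶜ ∩ v) ≤ μ.real u :=
  calc μ.real (s ∩ t) + μ.real (sᶜ ∩ v) ≤ μ.real (u ∩ s) + μ.real (u \ s) :=
        add_le_add (measureReal_mono fun _ hx => ⟨ht hx, hx.1⟩)
          (measureReal_mono fun _ hx => ⟨hv hx, hx.1⟩)
    _ = μ.real u := measureReal_inter_add_sdiff hs

end Measure

theorem weak_merge_probability_decomposition_general
    {Trace : Type*} [MeasurableSpace Trace]
    (P : Measure Trace) [IsProbabilityMeasure P]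
    (A₁ G₁ A₂ G₂ : Set Trace)
    (hA₁ : MeasurableSet A₁)
    (p₁ p₂ : ℝ)
    (h₁ : P A₁ > 0 → p₁ ≤ (P[|A₁] {τ | τ ∈ A₁ → τ ∈ G₁}).toReal)
    (h₂ : P A₁ < 1 → p₂ ≤ (P[|A₁ᶜ] {τ | τ ∈ A₂ → τ ∈ G₂}).toReal) :
    p₁ * (P A₁).toReal + p₂ * (1 - (P A₁).toReal) ≤
      (P {τ | τ ∈ A₁ ∪ A₂ → τ ∈ G₁ ∪ G₂ ∪ (A₁ ∪ A₂)ᶜ}).toReal := by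
  have hA₁_lt_one : 0 < P A₁ᶜ → P A₁ < 1 := fun h =>
    prob_le_one.lt_of_ne ((prob_compl_eq_zero_iff hA₁).not.mp h.ne')
  have bound₁ := mul_measureReal_le_measureReal_inter_of_le_cond hA₁ h₁
  have bound₂ := mul_measureReal_le_measureReal_inter_of_le_cond hA₁.compl (h₂ ∘ hA₁_lt_one)
  rw [probReal_compl_eq_one_sub hA₁] at bound₂
  exact (add_le_add bound₁ bound₂).trans <| measureReal_inter_add_compl_inter_le hA₁
    inter_setOf_imp_subset_weakMerge compl_inter_setOf_imp_subset_weakMerge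

/-- Weak merge probability decomposition: if `P(τ ⊨ C₁ | A₁) ≥ p₁` (when `P(A₁) > 0`)
and `P(τ ⊨ C₂ | ¬A₁) ≥ p₂` (when `P(A₁) < 1`), then the probability of satisfying the
weak merge `C₁ ⋈ C₂` is at least `p₁·P(A₁) + p₂·(1 − P(A₁))`. -/
theorem weak_merge_probability_decomposition
    {Trace : Type*} [MeasurableSpace Trace]
    (P : Measure Trace) [IsProbabilityMeasure P]
    (A₁ G₁ A₂ G₂ : Set Trace)
    (hA₁ : MeasurableSet A₁) (hG₁ : MeasurableSet G₁)
    (hA₂ : MeasurableSet A₂) (hG₂ : MeasurableSet G₂)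
    (p₁ p₂ : ℝ) (hp₁ : p₁ ∈ Set.Icc (0:ℝ) 1) (hp₂ : p₂ ∈ Set.Icc (0:ℝ) 1)
    (h₁ : P A₁ > 0 → p₁ ≤ (P[|A₁] {τ | τ ∈ A₁ → τ ∈ G₁}).toReal)
    (h₂ : P A₁ < 1 → p₂ ≤ (P[|A₁ᶜ] {τ | τ ∈ A₂ → τ ∈ G₂}).toReal) :
    p₁ * (P A₁).toReal + p₂ * (1 - (P A₁).toReal) ≤
      (P {τ | τ ∈ A₁ ∪ A₂ → τ ∈ G₁ ∪ G₂ ∪ (A₁ ∪ A₂)ᶜ}).toReal :=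
  weak_merge_probability_decomposition_general P A₁ G₁ A₂ G₂ hA₁ p₁ p₂ h₁ h₂
end

section
/- Soundness of the testing-based weak-merge contract checking procedure: let Ĉ be a finite multiset of traces and partition it as T_P = {τ ∈ Ĉ : τ ∈ A₁} and T_T = Ĉ \ T_P. Suppose every trace satisfies C₁ = (A₁, G₁) (i.e., for all τ, τ ∈ A₁ → τ ∈ G₁), and suppose k is a lower bound on the number of traces in T_T satisfying C₂. Then k + |T_P| is a lower bound on the number of traces in Ĉ satisfying the weak merge C₁ ⋈ C₂. -/
open Classical

/-- Soundness of the testing-based weak-merge contract checking procedure: if every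
trace satisfies `C₁ = (A₁, G₁)`, and `k` lower-bounds the number of traces in
`T_T = T̂ \ T_P` (where `T_P = {τ ∈ T̂ : τ ∈ A₁}`) satisfying `C₂`, then `k + |T_P|`
lower-bounds the number of traces in `T̂` satisfying the weak merge `C₁ ⋈ C₂`. -/
theorem weak_merge_testing_sound {Trace : Type*} [DecidableEq Trace]
    (A₁ G₁ A₂ G₂ : Trace → Prop)
    (That : Finset Trace) (k : ℕ)
    (hproved : ∀ τ, A₁ τ → G₁ τ)
    (hk : k ≤ ((That \ That.filter (fun τ => A₁ τ)).filter
        (fun τ => A₂ τ → G₂ τ)).card) :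
    k + (That.filter (fun τ => A₁ τ)).card ≤
      (That.filter
        (fun τ => (A₁ τ ∨ A₂ τ) → (G₁ τ ∨ G₂ τ ∨ ¬(A₁ τ ∨ A₂ τ)))).card := by
  set TP := That.filter (fun τ => A₁ τ) with hTP
  set F := (That \ TP).filter (fun τ => A₂ τ → G₂ τ) with hF
  set S := That.filter
      (fun τ => (A₁ τ ∨ A₂ τ) → (G₁ τ ∨ G₂ τ ∨ ¬(A₁ τ ∨ A₂ τ))) with hS
  have hdisj : Disjoint F TP := by
    refine Finset.disjoint_left.mpr ?_
    intro τ hτF hτP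
    have := (Finset.mem_filter.mp hτF).1
    exact (Finset.mem_sdiff.mp this).2 hτP
  have hsub : F ∪ TP ⊆ S := by
    intro τ hτ
    rcases Finset.mem_union.mp hτ with h | h
    · have h1 := Finset.mem_filter.mp h
      have h2 := Finset.mem_sdiff.mp h1.1
      have hnA1 : ¬ A₁ τ := fun hA =>
        h2.2 (Finset.mem_filter.mpr ⟨h2.1, hA⟩)
      refine Finset.mem_filter.mpr ⟨h2.1, ?_⟩
      rintro (hA | hA)
      · exact absurd hA hnA1
      · exact Or.inr (Or.inl (h1.2 hA))
    · have h1 := Finset.mem_filter.mp h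
      exact Finset.mem_filter.mpr ⟨h1.1, fun _ => Or.inl (hproved τ h1.2)⟩
  calc k + TP.card ≤ F.card + TP.card := by omega
    _ = (F ∪ TP).card := (Finset.card_union_of_disjoint hdisj).symm
    _ ≤ S.card := Finset.card_le_card hsub
end
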